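/- arXiv:2309.00596 — 3 statements merged into one kernel-verified Lean document; each statement's English description precedes it below -/
import Mathlib

section
/- Let 𝓡 be an algebraic curvature tensor on ℝ^n (n ≥ 3) and let a₁, …, a_n be an orthonormal basis of ℝ^n. Setting ω_{jk} := a₁ ∧ (a_j + i a_k) ∈ Λ²ℂ^n for 1 < j < k ≤ n, one has Ric(𝓡)(a₁, a₁) = (1/(n−2)) · Σ_{1<j<k≤n} 𝓡(ω_{jk}, ω̄_{jk}). -/
open scoped BigOperators ComplexOrder
open Complex Matrix

noncomputable section

/-- Wedge product of two vectors, modelled as an antisymmetric matrix. -/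
def wedge {n : ℕ} {𝕜 : Type} [CommRing 𝕜] (v w : Fin n → 𝕜) :
    Matrix (Fin n) (Fin n) 𝕜 := fun i j => v i * w j - v j * w i

/-- Euclidean inner product on ℝ^n. -/
def gR {n : ℕ} (a b : Fin n → ℝ) : ℝ := ∑ i, a i * b i

/-- Complex-bilinear extension of the Euclidean inner product to ℂ^n. -/
def gC {n : ℕ} (v w : Fin n → ℂ) : ℂ := ∑ i, v i * w i

def vecConj {n : ℕ} (v : Fin n → ℂ) : Fin n → ℂ := fun i => (starRingEnd ℂ) (v i)

def vecC {n : ℕ} (a : Fin n → ℝ) : Fin n → ℂ := fun i => (a i : ℂ)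

/-- Inner product on Λ²ℝ^n in the matrix model. -/
def IR {n : ℕ} (α β : Matrix (Fin n) (Fin n) ℝ) : ℝ := (1/2) * (∑ i, ∑ j, α i j * β i j)

/-- Complex-bilinear extension of the inner product to Λ²ℂ^n. -/
def IC {n : ℕ} (ω η : Matrix (Fin n) (Fin n) ℂ) : ℂ := (1/2) * (∑ i, ∑ j, ω i j * η i j)

def matConj {n : ℕ} (ω : Matrix (Fin n) (Fin n) ℂ) : Matrix (Fin n) (Fin n) ℂ :=
  fun i j => (starRingEnd ℂ) (ω i j)

def matRe {n : ℕ} (ω : Matrix (Fin n) (Fin n) ℂ) : Matrix (Fin n) (Fin n) ℝ :=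
  fun i j => (ω i j).re

def matIm {n : ℕ} (ω : Matrix (Fin n) (Fin n) ℂ) : Matrix (Fin n) (Fin n) ℝ :=
  fun i j => (ω i j).im

def matC {n : ℕ} (α : Matrix (Fin n) (Fin n) ℝ) : Matrix (Fin n) (Fin n) ℂ :=
  fun i j => (α i j : ℂ)

/-- Λ²ℝ^n : antisymmetric real matrices. -/
def SkewR (n : ℕ) : Set (Matrix (Fin n) (Fin n) ℝ) := {M | Mᵀ = -M}

/-- Λ²ℂ^n : antisymmetric complex matrices. -/
def SkewC (n : ℕ) : Set (Matrix (Fin n) (Fin n) ℂ) := {M | Mᵀ = -M}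

/-- ω is simple: a nonzero wedge of two vectors. -/
def IsSimple {n : ℕ} (ω : Matrix (Fin n) (Fin n) ℂ) : Prop :=
  ω ≠ 0 ∧ ∃ v w : Fin n → ℂ, ω = wedge v w

/-- The type of (candidate) curvature tensors: bilinear forms on Λ²ℝ^n in the matrix model. -/
abbrev CurvOp (n : ℕ) := Matrix (Fin n) (Fin n) ℝ → Matrix (Fin n) (Fin n) ℝ → ℝ

structure IsSymmBilin {n : ℕ} (R : CurvOp n) : Prop where
  add_left : ∀ α β γ, R (α + β) γ = R α γ + R β γ
  smul_left : ∀ (c : ℝ) (α β), R (c • α) β = c * R α β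
  symm : ∀ α β, R α β = R β α

/-- First Bianchi identity. -/
def Bianchi {n : ℕ} (R : CurvOp n) : Prop :=
  ∀ v w x y : Fin n → ℝ,
    R (wedge v w) (wedge x y) + R (wedge v x) (wedge y w) + R (wedge v y) (wedge w x) = 0

/-- Complex-bilinear extension of a real bilinear form on Λ²ℝ^n to Λ²ℂ^n. -/
def RC {n : ℕ} (R : CurvOp n) (ω η : Matrix (Fin n) (Fin n) ℂ) : ℂ :=
  ((R (matRe ω) (matRe η) - R (matIm ω) (matIm η) : ℝ) : ℂ) +
    Complex.I * ((R (matRe ω) (matIm η) + R (matIm ω) (matRe η) : ℝ) : ℂ)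

/-- Standard basis vector of ℝ^n. -/
def stdB (n : ℕ) (j : Fin n) : Fin n → ℝ := fun k => if k = j then 1 else 0

/-- Ricci curvature of a curvature tensor. -/
def Ric {n : ℕ} (R : CurvOp n) (u : Fin n → ℝ) : ℝ :=
  ∑ j, R (wedge u (stdB n j)) (wedge u (stdB n j))

/-- Scalar curvature. -/
def Scal {n : ℕ} (R : CurvOp n) : ℝ := ∑ i, Ric R (stdB n i)

/-!
For a real symmetric form, `𝓡(ω, ω̄) = 𝓡(Re ω, Re ω) + 𝓡(Im ω, Im ω)`, so with
`f j := 𝓡(a₁ ∧ a_j, a₁ ∧ a_j)` each term is `𝓡(ω_{jk}, ω̄_{jk}) = f j + f k`. Each of the `n - 1` indices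
`j > 1` lies in exactly `n - 2` of the pairs `1 < j < k`, and `f 1 = 0`, so the sum is `(n - 2) ∑_j f j`.
Finally `∑_j f j` is the trace of the quadratic form `v ↦ 𝓡(a₁ ∧ v, a₁ ∧ v)`, which does not depend on
the orthonormal basis, hence is `Ric(𝓡)(a₁, a₁)`.
-/

namespace IsSymmBilin

variable {n : ℕ} {R : CurvOp n}

theorem add_right (hR : IsSymmBilin R) (α β γ : Matrix (Fin n) (Fin n) ℝ) :
    R α (β + γ) = R α β + R α γ := by
  rw [hR.symm, hR.add_left, hR.symm β, hR.symm γ]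

theorem smul_right (hR : IsSymmBilin R) (c : ℝ) (α β : Matrix (Fin n) (Fin n) ℝ) :
    R α (c • β) = c * R α β := by
  rw [hR.symm, hR.smul_left, hR.symm]

def toBilinForm (hR : IsSymmBilin R) : LinearMap.BilinForm ℝ (Matrix (Fin n) (Fin n) ℝ) :=
  LinearMap.mk₂ ℝ R hR.add_left hR.smul_left hR.add_right hR.smul_right

@[simp]
theorem toBilinForm_apply (hR : IsSymmBilin R) (α β : Matrix (Fin n) (Fin n) ℝ) :
    hR.toBilinForm α β = R α β :=
  rfl

theorem zero_left (hR : IsSymmBilin R) (β : Matrix (Fin n) (Fin n) ℝ) : R 0 β = 0 :=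
  hR.toBilinForm.map_zero₂ β

theorem neg_right (hR : IsSymmBilin R) (α β : Matrix (Fin n) (Fin n) ℝ) :
    R α (-β) = -R α β := by
  simpa using (hR.toBilinForm α).map_neg β

theorem RC_matConj_self (hR : IsSymmBilin R) (ω : Matrix (Fin n) (Fin n) ℂ) :
    RC R ω (matConj ω) = ((R (matRe ω) (matRe ω) + R (matIm ω) (matIm ω) : ℝ) : ℂ) := by
  have hre : matRe (matConj ω) = matRe ω := by ext; simp [matRe, matConj]
  have him : matIm (matConj ω) = -matIm ω := by ext; simp [matIm, matConj]
  rw [RC, hre, him, hR.neg_right, hR.neg_right, hR.symm (matIm ω) (matRe ω)]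
  push_cast
  ring

end IsSymmBilin

section Wedge

variable {n : ℕ}

def wedgeLeft {𝕜 : Type} [CommRing 𝕜] (u : Fin n → 𝕜) :
    (Fin n → 𝕜) →ₗ[𝕜] Matrix (Fin n) (Fin n) 𝕜 where
  toFun := wedge u
  map_add' v w := by
    ext; simp only [wedge, Pi.add_apply, Matrix.add_apply]; ring
  map_smul' c v := by
    ext; simp only [wedge, Pi.smul_apply, Matrix.smul_apply, smul_eq_mul, RingHom.id_apply]; ring

theorem wedge_self {𝕜 : Type} [CommRing 𝕜] (u : Fin n → 𝕜) : wedge u u = 0 := by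
  ext; simp [wedge, mul_comm]

theorem matRe_wedge_add_I_mul (u v w : Fin n → ℝ) :
    matRe (wedge (vecC u) (fun i => (v i : ℂ) + Complex.I * (w i : ℂ))) = wedge u v := by
  ext; simp [matRe, wedge, vecC]

theorem matIm_wedge_add_I_mul (u v w : Fin n → ℝ) :
    matIm (wedge (vecC u) (fun i => (v i : ℂ) + Complex.I * (w i : ℂ))) = wedge u w := by
  ext; simp [matIm, wedge, vecC]

end Wedge

theorem LinearMap.BilinForm.sum_apply_rows_eq_sum_apply_single {n : ℕ}
    (B : LinearMap.BilinForm ℝ (Fin n → ℝ)) (A : Matrix (Fin n) (Fin n) ℝ) (hA : A * Aᵀ = 1) :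
    ∑ j, B (A j) (A j) = ∑ j, B (Pi.single j 1) (Pi.single j 1) := by
  set M := LinearMap.toMatrix₂' ℝ B
  have hdiag : ∀ j, B (A j) (A j) = (A * M * Aᵀ) j j := fun j => by
    rw [← Matrix.toLinearMap₂'_toMatrix' (R := ℝ) B, Matrix.toLinearMap₂'_apply', Matrix.mul_apply,
      dotProduct_mulVec]
    rfl
  calc ∑ j, B (A j) (A j) = (A * M * Aᵀ).trace := Finset.sum_congr rfl fun j _ => hdiag j
    _ = M.trace := by rw [Matrix.trace_mul_cycle, mul_eq_one_comm.mp hA, Matrix.one_mul]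

theorem IsSymmBilin.ric_eq_sum_orthonormal {n : ℕ} {R : CurvOp n} (hR : IsSymmBilin R)
    (a : Fin n → Fin n → ℝ) (ha : ∀ i j, gR (a i) (a j) = if i = j then 1 else 0)
    (u : Fin n → ℝ) :
    Ric R u = ∑ j, R (wedge u (a j)) (wedge u (a j)) := by
  have hA : Matrix.of a * (Matrix.of a)ᵀ = 1 := by
    ext i j; simpa [Matrix.mul_apply, Matrix.one_apply, gR] using ha i j
  have hstd : ∀ j, stdB n j = Pi.single j 1 := fun j => by
    ext k; simp [stdB, Pi.single_apply]
  simp only [Ric, hstd]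
  exact (LinearMap.BilinForm.sum_apply_rows_eq_sum_apply_single
    (hR.toBilinForm.compl₁₂ (wedgeLeft u) (wedgeLeft u)) (Matrix.of a) hA).symm

section Counting

open Finset

theorem Finset.sum_sum_ite_lt_add {ι M : Type*} [LinearOrder ι] [AddCommMonoid M] (s : Finset ι)
    (f : ι → M) :
    ∑ j ∈ s, ∑ k ∈ s, (if j < k then f j + f k else 0) = (#s - 1) • ∑ j ∈ s, f j := by
  have hpair : ∀ j ∈ s, ∑ k ∈ s, (if j < k then f j else 0) + ∑ k ∈ s, (if k < j then f j else 0)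
      = (#s - 1) • f j := fun j hj => by
    rw [← sum_add_distrib, ← card_erase_of_mem hj, ← sum_const, ← filter_ne', sum_filter]
    refine sum_congr rfl fun k _ => ?_
    rcases lt_trichotomy j k with h | rfl | h
    · simp [h, h.ne', not_lt_of_gt h]
    · simp
    · simp [h, h.ne, not_lt_of_gt h]
  have hsplit : ∀ j k : ι, (if j < k then f j + f k else 0)
      = (if j < k then f j else 0) + (if j < k then f k else 0) := fun j k => by
    rw [ite_add_ite, add_zero]
  simp only [hsplit, sum_add_distrib]
  rw [sum_comm (f := fun j k => if j < k then f k else 0), ← sum_add_distrib, smul_sum]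
  exact sum_congr rfl hpair

theorem Fin.sum_sum_ite_pos_lt_add {n : ℕ} {M : Type*} [AddCommMonoid M] (f : Fin n → M)
    (i₀ : Fin n) (hi₀ : (i₀ : ℕ) = 0) (hf : f i₀ = 0) :
    ∑ j : Fin n, ∑ k : Fin n, (if 0 < (j : ℕ) ∧ (j : ℕ) < (k : ℕ) then f j + f k else 0)
      = (n - 2) • ∑ j, f j := by
  have hpos : ∀ j : Fin n, 0 < (j : ℕ) ↔ j ≠ i₀ := fun j => by
    rw [Ne, Fin.ext_iff, hi₀, Nat.pos_iff_ne_zero]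
  calc ∑ j : Fin n, ∑ k : Fin n, (if 0 < (j : ℕ) ∧ (j : ℕ) < (k : ℕ) then f j + f k else 0)
      = ∑ j ∈ univ.erase i₀, ∑ k ∈ univ.erase i₀, (if j < k then f j + f k else 0) := by
        rw [← filter_ne']
        simp only [sum_filter, ← hpos]
        refine sum_congr rfl fun j _ => ?_
        split_ifs with hj
        · refine sum_congr rfl fun k _ => ?_
          by_cases hjk : j < k
          · simp [hj, hjk, Fin.lt_def.mp hjk, hj.trans (Fin.lt_def.mp hjk)]
          · simp [hjk]
        · simp [hj]
    _ = (n - 2) • ∑ j, f j := by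
        rw [Finset.sum_sum_ite_lt_add, card_erase_of_mem (mem_univ _), card_univ, Fintype.card_fin,
          sum_erase _ hf]
        rfl

end Counting

theorem stmt_7 (n : ℕ) (hn : 3 ≤ n) (R : CurvOp n) (hR : IsSymmBilin R)
    (a : Fin n → Fin n → ℝ)
    (ha : ∀ i j, gR (a i) (a j) = if i = j then 1 else 0) :
    ((Ric R (a ⟨0, by omega⟩) : ℝ) : ℂ) =
      (1 / ((n : ℂ) - 2)) *
        ∑ j : Fin n, ∑ k : Fin n,
          if 0 < (j : ℕ) ∧ (j : ℕ) < (k : ℕ) then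
            RC R (wedge (vecC (a ⟨0, by omega⟩))
                (fun i => (a j i : ℂ) + Complex.I * (a k i : ℂ)))
              (matConj (wedge (vecC (a ⟨0, by omega⟩))
                (fun i => (a j i : ℂ) + Complex.I * (a k i : ℂ))))
          else 0 := by
  set i₀ : Fin n := ⟨0, by omega⟩
  set f : Fin n → ℂ := fun j => (R (wedge (a i₀) (a j)) (wedge (a i₀) (a j)) : ℂ)
  have hterm : ∀ j k : Fin n,
      RC R (wedge (vecC (a i₀)) (fun i => (a j i : ℂ) + Complex.I * (a k i : ℂ)))
        (matConj (wedge (vecC (a i₀)) (fun i => (a j i : ℂ) + Complex.I * (a k i : ℂ))))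
        = f j + f k := fun j k => by
    rw [hR.RC_matConj_self, matRe_wedge_add_I_mul, matIm_wedge_add_I_mul]
    push_cast
    rfl
  have hf₀ : f i₀ = 0 := by simp [f, wedge_self, hR.zero_left]
  have hRic : (Ric R (a i₀) : ℂ) = ∑ j, f j := by
    rw [hR.ric_eq_sum_orthonormal a ha]
    push_cast
    rfl
  have hn₂ : ((n - 2 : ℕ) : ℂ) = (n : ℂ) - 2 := by
    rw [Nat.cast_sub (by omega)]
    norm_num
  have hn₂_ne : (n : ℂ) - 2 ≠ 0 := by
    rw [← hn₂, Nat.cast_ne_zero]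
    omega
  simp only [hterm]
  rw [Fin.sum_sum_ite_pos_lt_add f i₀ rfl hf₀, hRic, nsmul_eq_mul, hn₂]
  field_simp
end
end

section
/- If an algebraic curvature tensor 𝓡 on ℝ^n (n ≥ 3) is weakly PIC1, i.e. 𝓡(ω, ω̄) ≥ 0 for every nonzero simple isotropic ω ∈ Λ²ℂ^n, then the Ricci curvature of 𝓡 is nonnegative: Ric(𝓡)(u,u) ≥ 0 for all u ∈ ℝ^n. -/
open scoped BigOperators ComplexOrder
open Complex Matrix

noncomputable section

/-! Complete `u ≠ 0` to an orthonormal frame `e₀ = u / |u|, e₁, …, e_{n-1}`, so that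
`Ric(u, u) = ∑_{a ≥ 1} 𝓡(u ∧ e_a, u ∧ e_a)`. For `1 ≤ a ≠ b` the 2-form `ω = u ∧ (e_a + i e_b)`
is simple and isotropic, and `𝓡(ω, ω̄) = 𝓡(u ∧ e_a, u ∧ e_a) + 𝓡(u ∧ e_b, u ∧ e_b)`. Hence any two of
the `n - 1 ≥ 2` summands have a nonnegative sum, and then so does the whole sum. -/

theorem Finset.sum_nonneg_of_pairwise_add_nonneg {ι : Type*} {s : Finset ι} {q : ι → ℝ}
    (hs : 2 ≤ s.card) (hq : ∀ a ∈ s, ∀ b ∈ s, a ≠ b → 0 ≤ q a + q b) :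
    0 ≤ ∑ a ∈ s, q a := by
  classical
  by_cases hpos : ∀ a ∈ s, 0 ≤ q a
  · exact Finset.sum_nonneg hpos
  simp only [not_forall, not_le] at hpos
  obtain ⟨a, ha, hqa⟩ := hpos
  obtain ⟨b, hb⟩ : (s.erase a).Nonempty := by
    rw [← Finset.card_pos, Finset.card_erase_of_mem ha]; omega
  rw [← Finset.add_sum_erase s q ha, ← Finset.add_sum_erase _ q hb, ← add_assoc]
  refine add_nonneg (hq a ha b (Finset.mem_of_mem_erase hb) (Finset.ne_of_mem_erase hb).symm)
    (Finset.sum_nonneg fun c hc => ?_)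
  have hca : c ∈ s.erase a := Finset.mem_of_mem_erase hc
  have := hq a ha c (Finset.mem_of_mem_erase hca) (Finset.ne_of_mem_erase hca).symm
  linarith

theorem exists_orthonormalBasis_apply_eq_inv_norm_smul {ι E : Type*} [Fintype ι]
    [NormedAddCommGroup E] [InnerProductSpace ℝ E] [FiniteDimensional ℝ E]
    (hcard : Module.finrank ℝ E = Fintype.card ι) {x : E} (hx : x ≠ 0) (i₀ : ι) :
    ∃ b : OrthonormalBasis ι ℝ E, b i₀ = ‖x‖⁻¹ • x := by
  have hon : Orthonormal ℝ (({i₀} : Set ι).domRestrict fun _ => ‖x‖⁻¹ • x) := by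
    rw [orthonormal_subsingleton_iff]
    exact fun _ => norm_smul_inv_norm hx
  obtain ⟨b, hb⟩ := hon.exists_orthonormalBasis_extension_of_card_eq hcard
  exact ⟨b, hb i₀ rfl⟩

section Vectors

variable {n : ℕ}

theorem gR_ofLp (x y : EuclideanSpace ℝ (Fin n)) : gR x.ofLp y.ofLp = inner ℝ x y := by
  simp [gR, PiLp.inner_apply, mul_comm]

theorem gR_orthonormalBasis (b : OrthonormalBasis (Fin n) ℝ (EuclideanSpace ℝ (Fin n)))
    (a a' : Fin n) : gR (b a).ofLp (b a').ofLp = if a = a' then 1 else 0 := by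
  rw [gR_ofLp]
  exact orthonormal_iff_ite.1 b.orthonormal a a'

theorem sum_orthonormalBasis_mul_apply
    (b : OrthonormalBasis (Fin n) ℝ (EuclideanSpace ℝ (Fin n))) (j k : Fin n) :
    ∑ a, b a j * b a k = if j = k then 1 else 0 := by
  have h := b.sum_inner_mul_inner (EuclideanSpace.single j 1) (EuclideanSpace.single k 1)
  simp only [EuclideanSpace.inner_single_left, EuclideanSpace.inner_single_right, map_one,
    one_mul] at h
  simpa [PiLp.single_apply, eq_comm] using h

theorem wedge_eq_sum_smul_stdB (u v : Fin n → ℝ) :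
    wedge u v = ∑ j, v j • wedge u (stdB n j) := by
  funext i k
  simp only [wedge, stdB, Matrix.sum_apply, Matrix.smul_apply, smul_eq_mul, mul_sub, mul_ite,
    mul_one, mul_zero, Finset.sum_sub_distrib, Finset.sum_ite_eq, Finset.mem_univ, if_true]
  ring

theorem wedge_smul_self (c : ℝ) (u : Fin n → ℝ) : wedge (c • u) u = 0 := by
  funext i k
  simp only [wedge, Pi.smul_apply, smul_eq_mul, Matrix.zero_apply]
  ring

theorem wedge_zero_left {𝕜 : Type} [CommRing 𝕜] (v : Fin n → 𝕜) : wedge 0 v = 0 := by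
  funext i k
  simp [wedge]

theorem wedge_neg_right {𝕜 : Type} [CommRing 𝕜] (u v : Fin n → 𝕜) :
    wedge u (-v) = -wedge u v := by
  funext i k
  simp only [wedge, Pi.neg_apply, Matrix.neg_apply]
  ring

theorem IC_wedge_wedge (a b c d : Fin n → ℂ) :
    IC (wedge a b) (wedge c d) = gC a c * gC b d - gC a d * gC b c := by
  have hterm : ∀ i j : Fin n, (a i * b j - a j * b i) * (c i * d j - c j * d i)
      = (a i * c i) * (b j * d j) + (a j * c j) * (b i * d i)
        - ((a i * d i) * (b j * c j) + (a j * d j) * (b i * c i)) := by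
    intro i j; ring
  simp only [IC, wedge, gC, hterm, Finset.sum_add_distrib, Finset.sum_sub_distrib,
    ← Finset.sum_mul, ← Finset.mul_sum]
  ring

theorem eq_zero_of_wedge_eq_zero {a b : Fin n → ℂ} (h : wedge a b = 0) (hab : gC a b = 0)
    (ha : gC a a ≠ 0) : b = 0 := by
  funext j
  have hcontract : ∑ i, wedge a b i j * a i = gC a a * b j - gC a b * a j := by
    simp only [wedge, gC, sub_mul, Finset.sum_sub_distrib, Finset.sum_mul]
    congr 1 <;> exact Finset.sum_congr rfl fun i _ => by ring
  rw [h, hab] at hcontract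
  simpa [ha] using hcontract.symm

theorem gR_self_ne_zero {u : Fin n → ℝ} (hu : u ≠ 0) : gR u u ≠ 0 := by
  have hx : WithLp.toLp 2 u ≠ 0 := by simpa using hu
  have := (inner_self_ne_zero (𝕜 := ℝ)).2 hx
  rwa [← gR_ofLp] at this

end Vectors

namespace IsSymmBilin

variable {n : ℕ} {R : CurvOp n} (hR : IsSymmBilin R)
include hR

theorem map_zero_left (β : Matrix (Fin n) (Fin n) ℝ) : R 0 β = 0 := by
  simpa using hR.smul_left 0 0 β

theorem map_sum_left {ι : Type*} (s : Finset ι) (f : ι → Matrix (Fin n) (Fin n) ℝ)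
    (β : Matrix (Fin n) (Fin n) ℝ) : R (∑ i ∈ s, f i) β = ∑ i ∈ s, R (f i) β := by
  classical
  induction s using Finset.cons_induction with
  | empty => simpa using hR.map_zero_left β
  | cons a s ha ih => rw [Finset.sum_cons, hR.add_left, ih, Finset.sum_cons]

theorem map_neg_right (α β : Matrix (Fin n) (Fin n) ℝ) : R α (-β) = -R α β := by
  rw [hR.symm, ← neg_one_smul ℝ β, hR.smul_left, hR.symm, neg_one_mul]

theorem map_wedge_wedge_eq_sum (u v : Fin n → ℝ) :
    R (wedge u v) (wedge u v)
      = ∑ j, ∑ k, v j * v k * R (wedge u (stdB n j)) (wedge u (stdB n k)) := by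
  rw [wedge_eq_sum_smul_stdB u v, hR.map_sum_left]
  refine Finset.sum_congr rfl fun j _ => ?_
  rw [hR.smul_left, hR.symm, hR.map_sum_left, Finset.mul_sum]
  refine Finset.sum_congr rfl fun k _ => ?_
  rw [hR.smul_left, hR.symm]
  ring

theorem Ric_zero : Ric R 0 = 0 := by
  simp [Ric, wedge_zero_left, hR.map_zero_left]

theorem Ric_eq_sum_orthonormalBasis
    (b : OrthonormalBasis (Fin n) ℝ (EuclideanSpace ℝ (Fin n))) (u : Fin n → ℝ) :
    Ric R u = ∑ a, R (wedge u (b a).ofLp) (wedge u (b a).ofLp) := by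
  set Rjk := fun j k => R (wedge u (stdB n j)) (wedge u (stdB n k))
  symm
  calc ∑ a, R (wedge u (b a).ofLp) (wedge u (b a).ofLp)
      = ∑ a, ∑ j, ∑ k, b a j * b a k * Rjk j k := by
        simp only [hR.map_wedge_wedge_eq_sum, Rjk]
    _ = ∑ j, ∑ k, (∑ a, b a j * b a k) * Rjk j k := by
        rw [Finset.sum_comm]
        simp only [Finset.sum_mul]
        exact Finset.sum_congr rfl fun j _ => Finset.sum_comm
    _ = Ric R u := by
        simp [sum_orthonormalBasis_mul_apply, Ric, Rjk]

end IsSymmBilin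

section Complexification

variable {n : ℕ}

def cplxVec (v w : Fin n → ℝ) : Fin n → ℂ := fun i => v i + I * w i

theorem gC_comm (a b : Fin n → ℂ) : gC a b = gC b a := by
  simp only [gC, mul_comm]

theorem gC_vecC_vecC (a b : Fin n → ℝ) : gC (vecC a) (vecC b) = gR a b := by
  simp [gC, gR, vecC]

theorem gC_vecC_cplxVec (u v w : Fin n → ℝ) :
    gC (vecC u) (cplxVec v w) = gR u v + I * gR u w := by
  simp only [gC, gR, vecC, cplxVec]
  push_cast
  rw [Finset.mul_sum, ← Finset.sum_add_distrib]
  exact Finset.sum_congr rfl fun i _ => by ring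

theorem gC_cplxVec_self (v w : Fin n → ℝ) :
    gC (cplxVec v w) (cplxVec v w) = ((gR v v - gR w w : ℝ) : ℂ) + 2 * I * gR v w := by
  simp only [gC, gR, cplxVec]
  push_cast
  rw [Finset.mul_sum, ← Finset.sum_sub_distrib, ← Finset.sum_add_distrib]
  exact Finset.sum_congr rfl fun i _ => by linear_combination (w i : ℂ) * w i * I_sq

theorem matRe_wedge_vecC_cplxVec (u v w : Fin n → ℝ) :
    matRe (wedge (vecC u) (cplxVec v w)) = wedge u v := by
  funext i j
  simp [matRe, wedge, vecC, cplxVec]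

theorem matIm_wedge_vecC_cplxVec (u v w : Fin n → ℝ) :
    matIm (wedge (vecC u) (cplxVec v w)) = wedge u w := by
  funext i j
  simp [matIm, wedge, vecC, cplxVec]

theorem matConj_wedge_vecC_cplxVec (u v w : Fin n → ℝ) :
    matConj (wedge (vecC u) (cplxVec v w)) = wedge (vecC u) (cplxVec v (-w)) := by
  funext i j
  simp [matConj, wedge, vecC, cplxVec]

theorem RC_wedge_vecC_cplxVec_matConj {R : CurvOp n} (hR : IsSymmBilin R) (u v w : Fin n → ℝ) :
    RC R (wedge (vecC u) (cplxVec v w)) (matConj (wedge (vecC u) (cplxVec v w)))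
      = ((R (wedge u v) (wedge u v) + R (wedge u w) (wedge u w) : ℝ) : ℂ) := by
  rw [matConj_wedge_vecC_cplxVec, RC, matRe_wedge_vecC_cplxVec, matRe_wedge_vecC_cplxVec,
    matIm_wedge_vecC_cplxVec, matIm_wedge_vecC_cplxVec, wedge_neg_right, hR.map_neg_right,
    hR.map_neg_right, hR.symm (wedge u w) (wedge u v)]
  push_cast
  ring

end Complexification

def IsWeaklyPIC1 {n : ℕ} (R : CurvOp n) : Prop :=
  ∀ ω : Matrix (Fin n) (Fin n) ℂ, IsSimple ω → IC ω ω = 0 → 0 ≤ RC R ω (matConj ω)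

theorem IsWeaklyPIC1.map_wedge_add_map_wedge_nonneg {n : ℕ} {R : CurvOp n} (h : IsWeaklyPIC1 R)
    (hR : IsSymmBilin R) {u v w : Fin n → ℝ} (hu : u ≠ 0) (hv : gR v v = 1) (hw : gR w w = 1)
    (hvw : gR v w = 0) (huv : gR u v = 0) (huw : gR u w = 0) :
    0 ≤ R (wedge u v) (wedge u v) + R (wedge u w) (wedge u w) := by
  set ω := wedge (vecC u) (cplxVec v w)
  have horth : gC (vecC u) (cplxVec v w) = 0 := by
    simp [gC_vecC_cplxVec, huv, huw]
  have hiso : IC ω ω = 0 := by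
    rw [IC_wedge_wedge, gC_comm (cplxVec v w), horth, gC_cplxVec_self, hv, hw, hvw]
    simp
  have hne : ω ≠ 0 := by
    intro h0
    have hζ := eq_zero_of_wedge_eq_zero h0 horth
      (by rw [gC_vecC_vecC]; exact_mod_cast gR_self_ne_zero hu)
    have hv0 : v = 0 := funext fun i => by
      simpa [cplxVec] using congrArg Complex.re (congrFun hζ i)
    simp [hv0, gR] at hv
  have hpos := h ω ⟨hne, _, _, rfl⟩ hiso
  rwa [RC_wedge_vecC_cplxVec_matConj hR, Complex.zero_le_real] at hpos

theorem stmt_8_general (n : ℕ) (hn : 3 ≤ n) (R : CurvOp n) (hR : IsSymmBilin R)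
    (h : ∀ ω : Matrix (Fin n) (Fin n) ℂ, IsSimple ω → IC ω ω = 0 →
      0 ≤ RC R ω (matConj ω)) :
    ∀ u : Fin n → ℝ, 0 ≤ Ric R u := by
  intro u
  rcases eq_or_ne u 0 with rfl | hu
  · rw [hR.Ric_zero]
  set x : EuclideanSpace ℝ (Fin n) := WithLp.toLp 2 u
  have hx : x ≠ 0 := by simpa [x] using hu
  set i₀ : Fin n := ⟨0, by omega⟩
  obtain ⟨b, hb⟩ := exists_orthonormalBasis_apply_eq_inv_norm_smul (by simp) hx i₀
  have hu_eq : u = ‖x‖ • (b i₀).ofLp := by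
    rw [hb, ← WithLp.ofLp_smul, smul_inv_smul₀ (norm_ne_zero_iff.2 hx)]
  have huf : ∀ a ≠ i₀, gR u (b a).ofLp = 0 := fun a ha => by
    rw [hu_eq, ← WithLp.ofLp_smul, gR_ofLp, inner_smul_left,
      b.orthonormal.inner_eq_zero ha.symm, mul_zero]
  rw [hR.Ric_eq_sum_orthonormalBasis b, ← Finset.add_sum_erase _ _ (Finset.mem_univ i₀),
    hu_eq, wedge_smul_self, hR.map_zero_left, zero_add, ← hu_eq]
  have hcard : 2 ≤ (Finset.univ.erase i₀).card := by
    rw [Finset.card_erase_of_mem (Finset.mem_univ i₀), Finset.card_univ, Fintype.card_fin]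
    omega
  refine Finset.sum_nonneg_of_pairwise_add_nonneg hcard fun a ha a' ha' haa' => ?_
  exact IsWeaklyPIC1.map_wedge_add_map_wedge_nonneg h hR hu
    (by simp [gR_orthonormalBasis]) (by simp [gR_orthonormalBasis])
    (by simp [gR_orthonormalBasis, haa']) (huf a (Finset.ne_of_mem_erase ha))
    (huf a' (Finset.ne_of_mem_erase ha'))

theorem stmt_8 (n : ℕ) (hn : 3 ≤ n) (R : CurvOp n) (hR : IsSymmBilin R) (hB : Bianchi R)
    (h : ∀ ω : Matrix (Fin n) (Fin n) ℂ, IsSimple ω → IC ω ω = 0 →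
      0 ≤ RC R ω (matConj ω)) :
    ∀ u : Fin n → ℝ, 0 ≤ Ric R u :=
  stmt_8_general n hn R hR h
end
end

section
/- With G as defined, every 𝓢 ∈ G satisfies 𝓢 + 𝓘 ∈ C_PIC2; that is, G ⊆ {𝓡 : 𝓡 + 𝓘 ∈ C_PIC2}, where 𝓘 is the curvature tensor of constant sectional curvature 1. -/
open scoped BigOperators ComplexOrder
open Complex Matrix

noncomputable section

def CPIC2 (n : ℕ) : Set (CurvOp n) :=
  {R | IsSymmBilin R ∧ Bianchi R ∧
    ∀ ω : Matrix (Fin n) (Fin n) ℂ, IsSimple ω → 0 ≤ RC R ω (matConj ω)}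

def CPIC1 (n : ℕ) : Set (CurvOp n) :=
  {R | IsSymmBilin R ∧ Bianchi R ∧
    ∀ ω : Matrix (Fin n) (Fin n) ℂ, IsSimple ω → IC ω ω = 0 → 0 ≤ RC R ω (matConj ω)}

def Gset (n : ℕ) : Set (CurvOp n) :=
  {R | IsSymmBilin R ∧ Bianchi R ∧
    ∀ ω : Matrix (Fin n) (Fin n) ℂ, IsSimple ω →
      0 ≤ RC R ω (matConj ω) + (‖IC ω ω‖ : ℂ)}

/-!
Write `ω = α + iβ` with `α, β` real. For a symmetric form, `𝓡(ω, ω̄) = 𝓡(α, α) + 𝓡(β, β)`, so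
`𝓘(ω, ω̄) = |α|² + |β|² = ∑ |ω_ij|² / 2`, which by the triangle inequality dominates
`|𝓘(ω, ω)| = |∑ ω_ij²| / 2`. Hence `(𝓢 + 𝓘)(ω, ω̄) ≥ 𝓢(ω, ω̄) + |𝓘(ω, ω)| ≥ 0`; symmetry and the
Bianchi identity pass to the sum since `𝓘` has both.
-/

section

variable {n : ℕ}

lemma gR_comm (a b : Fin n → ℝ) : gR a b = gR b a := by
  simp only [gR, mul_comm]

lemma IR_wedge (v w x y : Fin n → ℝ) :
    IR (wedge v w) (wedge x y) = gR v x * gR w y - gR v y * gR w x := by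
  have expand : ∀ i j : Fin n, (v i * w j - v j * w i) * (x i * y j - x j * y i)
      = (v i * x i) * (w j * y j) + (v j * x j) * (w i * y i)
        - (v i * y i) * (w j * x j) - (v j * y j) * (w i * x i) := by
    intros; ring
  simp only [IR, wedge, gR, expand, Finset.sum_add_distrib, Finset.sum_sub_distrib,
    ← Finset.sum_mul, ← Finset.mul_sum]
  ring

lemma bianchi_IR : Bianchi (IR (n := n)) := by
  intro v w x y
  simp only [IR_wedge, gR_comm x w, gR_comm y x, gR_comm y w]
  ring

lemma isSymmBilin_IR : IsSymmBilin (IR (n := n)) where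
  add_left α β γ := by
    simp only [IR, Matrix.add_apply, add_mul, Finset.sum_add_distrib]; ring
  smul_left c α β := by
    simp only [IR, Matrix.smul_apply, smul_eq_mul, mul_assoc, ← Finset.mul_sum]; ring
  symm α β := by simp only [IR, mul_comm]

lemma IsSymmBilin.add {R Q : CurvOp n} (hR : IsSymmBilin R) (hQ : IsSymmBilin Q) :
    IsSymmBilin (fun α β => R α β + Q α β) where
  add_left α β γ := by rw [hR.add_left, hQ.add_left]; ring
  smul_left c α β := by rw [hR.smul_left, hQ.smul_left]; ring
  symm α β := by rw [hR.symm, hQ.symm]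

lemma Bianchi.add {R Q : CurvOp n} (hR : Bianchi R) (hQ : Bianchi Q) :
    Bianchi (fun α β => R α β + Q α β) := fun v w x y => by
  linarith [hR v w x y, hQ v w x y]

lemma IsSymmBilin.map_neg_right_s13 {R : CurvOp n} (h : IsSymmBilin R)
    (α β : Matrix (Fin n) (Fin n) ℝ) : R α (-β) = -R α β := by
  rw [h.symm, ← neg_one_smul ℝ β, h.smul_left, h.symm]; ring

lemma matRe_matConj (ω : Matrix (Fin n) (Fin n) ℂ) : matRe (matConj ω) = matRe ω := by
  funext i j; simp [matRe, matConj]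

lemma matIm_matConj (ω : Matrix (Fin n) (Fin n) ℂ) : matIm (matConj ω) = -matIm ω := by
  funext i j; simp [matIm, matConj]

lemma RC_add (R Q : CurvOp n) (ω η : Matrix (Fin n) (Fin n) ℂ) :
    RC (fun α β => R α β + Q α β) ω η = RC R ω η + RC Q ω η := by
  simp only [RC]; push_cast; ring

lemma RC_matConj {R : CurvOp n} (h : IsSymmBilin R) (ω : Matrix (Fin n) (Fin n) ℂ) :
    RC R ω (matConj ω) = ((R (matRe ω) (matRe ω) + R (matIm ω) (matIm ω) : ℝ) : ℂ) := by
  rw [RC, matRe_matConj, matIm_matConj, h.map_neg_right_s13, h.map_neg_right_s13,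
    h.symm (matIm ω) (matRe ω)]
  push_cast; ring

lemma norm_IC_self_le (ω : Matrix (Fin n) (Fin n) ℂ) :
    ‖IC ω ω‖ ≤ IR (matRe ω) (matRe ω) + IR (matIm ω) (matIm ω) :=
  calc ‖IC ω ω‖ = 1 / 2 * ‖∑ i, ∑ j, ω i j * ω i j‖ := by simp [IC]
    _ ≤ 1 / 2 * ∑ i, ∑ j, ‖ω i j‖ ^ 2 := by
      gcongr
      refine (norm_sum_le _ _).trans (Finset.sum_le_sum fun i _ => ?_)
      exact (norm_sum_le _ _).trans_eq (by simp only [norm_mul, sq])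
    _ = IR (matRe ω) (matRe ω) + IR (matIm ω) (matIm ω) := by
      simp only [IR, matRe, matIm, Complex.sq_norm, Complex.normSq_apply,
        Finset.sum_add_distrib]
      ring

end

theorem stmt_13 (n : ℕ) :
    Gset n ⊆ {R : CurvOp n | (fun α β => R α β + IR α β) ∈ CPIC2 n} := by
  rintro R ⟨hSymm, hBianchi, hG⟩
  refine ⟨hSymm.add isSymmBilin_IR, hBianchi.add bianchi_IR, fun ω hω => ?_⟩
  have hGω := hG ω hω
  rw [RC_matConj hSymm, ← Complex.ofReal_add, Complex.zero_le_real] at hGω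
  rw [RC_add, RC_matConj hSymm, RC_matConj isSymmBilin_IR, ← Complex.ofReal_add,
    Complex.zero_le_real]
  linarith [norm_IC_self_le ω]
end
end
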